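/- For a nontrivial partition t of m (t ≠ (m)) with t₁ ≥ m/2, comparing with the trivial partition gives 1 − r(t) ≥ 3(m−t₁)(t₁−1)/((m−1)(m−2)), where r(t) is the normalized character at a 3-cycle; the maximizing partition for fixed t₁ is the hook (t₁, 1, 1, …, 1). -/

import Mathlib

open Finset

/-- Sum of `(i-j)²` over the cells of the Young diagram of the partition with row
lengths `t 1 ≥ t 2 ≥ ⋯` (1-based rows and columns). -/
noncomputable def youngSum (m : ℕ) (t : ℕ → ℕ) : ℝ :=
  ∑ i ∈ Finset.Icc 1 m, ∑ j ∈ Finset.Icc 1 (t i), ((i : ℝ) - (j : ℝ)) ^ 2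

/-- Ingram's normalized character of `S_m` at a 3-cycle for the partition `t`. -/
noncomputable def rIngram (m : ℕ) (t : ℕ → ℕ) : ℝ :=
  3 * youngSum m t / ((m : ℝ) * ((m : ℝ) - 1) * ((m : ℝ) - 2)) - 3 / (2 * ((m : ℝ) - 2))

/-!
Row 1 contributes `0² + 1² + ⋯ + (t₁ - 1)²`. List the `b = m - t₁` cells of the lower rows
one row after another: the `n`-th cell `(i, j)` has `|i - j| ≤ n`, because the `i - 2` rows
between it and row 1 are nonempty. So the lower rows contribute at most `1² + ⋯ + b²`, the value
for the hook `(t₁, 1, …, 1)`. The trivial partition gives `0² + ⋯ + (m - 1)²`, which exceeds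
the hook's value by exactly `m b (t₁ - 1)`; since `r((m)) = 1`, dividing by `m(m-1)(m-2)/3`
gives the bound.
-/

lemma sum_range_sq_eq (n : ℕ) :
    ∑ k ∈ range n, (k : ℝ) ^ 2 = (n : ℝ) * (n - 1) * (2 * n - 1) / 6 := by
  induction n with
  | zero => simp
  | succ n ih => rw [sum_range_succ, ih]; push_cast; ring

lemma sum_range_succ_sq_eq (n : ℕ) :
    ∑ k ∈ range n, ((k : ℝ) + 1) ^ 2 = (n : ℝ) * (n + 1) * (2 * n + 1) / 6 := by
  induction n with
  | zero => simp
  | succ n ih => rw [sum_range_succ, ih]; push_cast; ring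

lemma sum_Icc_one_eq_sum_range {M : Type*} [AddCommMonoid M] (f : ℕ → M) (n : ℕ) :
    ∑ j ∈ Icc 1 n, f j = ∑ k ∈ range n, f (k + 1) := by
  rw [← Ico_add_one_right_eq_Icc, sum_Ico_eq_sum_range, add_tsub_cancel_right]
  simp only [add_comm]

lemma sum_Icc_one_sub_sq (n : ℕ) :
    ∑ j ∈ Icc 1 n, ((1 : ℝ) - j) ^ 2 = ∑ k ∈ range n, (k : ℝ) ^ 2 := by
  rw [sum_Icc_one_eq_sum_range]
  push_cast
  simp

lemma sum_Icc_sub_sq_le {i A s : ℕ} (hA : (i - 2) * s ≤ A) :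
    ∑ j ∈ Icc 1 s, ((i : ℝ) - j) ^ 2 ≤ ∑ k ∈ range s, (((A + k : ℕ) : ℝ) + 1) ^ 2 := by
  rw [sum_Icc_one_eq_sum_range]
  refine sum_le_sum fun k hk => ?_
  have hi : i ≤ A + 2 := by
    have := Nat.le_mul_of_pos_right (i - 2) (pos_of_gt (mem_range.mp hk))
    omega
  have hiR : (i : ℝ) ≤ A + 2 := by exact_mod_cast hi
  push_cast
  apply sq_le_sq' <;> linarith

lemma sum_rows_sub_sq_le (t : ℕ → ℕ) (ht : AntitoneOn t (Set.Ici 2)) {M : ℕ} (hM : 1 ≤ M) :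
    ∑ i ∈ Icc 2 M, ∑ j ∈ Icc 1 (t i), ((i : ℝ) - j) ^ 2 ≤
      ∑ k ∈ range (∑ i ∈ Icc 2 M, t i), ((k : ℝ) + 1) ^ 2 := by
  induction M, hM using Nat.le_induction with
  | base => simp
  | succ M hM ih =>
    rw [sum_Icc_succ_top (by omega), sum_Icc_succ_top (by omega), sum_range_add]
    set A := ∑ i ∈ Icc 2 M, t i
    have hA : (M + 1 - 2) * t (M + 1) ≤ A := by
      have := card_nsmul_le_sum (Icc 2 M) t (t (M + 1)) fun i hi => by
        have hi := mem_Icc.mp hi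
        exact ht (Set.mem_Ici.mpr hi.1) (Set.mem_Ici.mpr (by omega)) (by omega)
      simpa [Nat.card_Icc] using this
    exact add_le_add ih (mod_cast sum_Icc_sub_sq_le hA)

lemma youngSum_le (m : ℕ) (hm : 1 ≤ m) (t : ℕ → ℕ) (ht : AntitoneOn t (Set.Ici 2)) :
    youngSum m t ≤ ∑ k ∈ range (t 1), (k : ℝ) ^ 2 +
      ∑ k ∈ range (∑ i ∈ Icc 2 m, t i), ((k : ℝ) + 1) ^ 2 := by
  rw [youngSum, ← insert_Icc_add_one_left_eq_Icc hm, sum_insert (by simp)]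
  refine add_le_add (le_of_eq ?_) (sum_rows_sub_sq_le t ht hm)
  simpa using sum_Icc_one_sub_sq (t 1)

lemma one_sub_rIngram_eq {m : ℕ} (hm : 3 ≤ m) (t : ℕ → ℕ) :
    1 - rIngram m t = 3 * ((m : ℝ) * (m - 1) * (2 * m - 1) / 6 - youngSum m t) /
      ((m : ℝ) * (m - 1) * (m - 2)) := by
  have hm' : (3 : ℝ) ≤ m := by exact_mod_cast hm
  have h2 : (m : ℝ) - 2 ≠ 0 := by linarith
  have h1 : (m : ℝ) - 1 ≠ 0 := by linarith
  have h0 : (m : ℝ) ≠ 0 := by linarith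
  rw [rIngram]
  field_simp
  ring

theorem one_sub_rIngram_ge_general (m : ℕ) (hm : 3 ≤ m) (t : ℕ → ℕ)
    (hmono : ∀ i, 1 ≤ i → t (i + 1) ≤ t i)
    (hsum : ∑ i ∈ Finset.Icc 1 m, t i = m) :
    3 * ((m : ℝ) - (t 1 : ℝ)) * ((t 1 : ℝ) - 1) / (((m : ℝ) - 1) * ((m : ℝ) - 2)) ≤
      1 - rIngram m t := by
  have ht : AntitoneOn t (Set.Ici 2) :=
    (antitoneOn_nat_Ici_of_succ_le hmono).mono (Set.Ici_subset_Ici.mpr one_le_two)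
  have hhook := youngSum_le m (by omega) t ht
  rw [sum_range_sq_eq, sum_range_succ_sq_eq] at hhook
  set b := ∑ i ∈ Icc 2 m, t i
  have hmb : (m : ℝ) = t 1 + b := by
    rw [← insert_Icc_add_one_left_eq_Icc (by omega), sum_insert (by simp)] at hsum
    exact_mod_cast hsum.symm
  have hm3 : (3 : ℝ) ≤ m := by exact_mod_cast hm
  have hden : (0 : ℝ) < m * (m - 1) * (m - 2) := by
    apply mul_pos (mul_pos _ _) _ <;> linarith
  have htrivial_eq : (m : ℝ) * (m - 1) * (2 * m - 1) / 6 = (t 1 : ℝ) * (t 1 - 1) * (2 * t 1 - 1) / 6 +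
      b * (b + 1) * (2 * b + 1) / 6 + m * b * (t 1 - 1) := by
    rw [hmb]; ring
  calc 3 * ((m : ℝ) - t 1) * (t 1 - 1) / ((m - 1) * (m - 2))
      = 3 * (m * b * (t 1 - 1)) / (m * (m - 1) * (m - 2)) := by
        have : (m : ℝ) ≠ 0 := by positivity
        rw [show (m : ℝ) - t 1 = b by linarith]
        field_simp
    _ ≤ 3 * ((m : ℝ) * (m - 1) * (2 * m - 1) / 6 - youngSum m t) / (m * (m - 1) * (m - 2)) := by
        gcongr
        linarith
    _ = 1 - rIngram m t := (one_sub_rIngram_eq hm t).symm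

/-- For a nontrivial partition `t` of `m ≥ 3` with `m/2 ≤ t₁ ≤ m - 1`, the
normalized character at a 3-cycle satisfies
`1 - r(t) ≥ 3(m-t₁)(t₁-1)/((m-1)(m-2))`. -/
theorem one_sub_rIngram_ge (m : ℕ) (hm : 3 ≤ m) (t : ℕ → ℕ)
    (hmono : ∀ i, 1 ≤ i → t (i + 1) ≤ t i)
    (hsum : ∑ i ∈ Finset.Icc 1 m, t i = m)
    (hsupp : ∀ i, m < i → t i = 0)
    (ht1lo : (m : ℝ) / 2 ≤ (t 1 : ℝ)) (ht1hi : t 1 ≤ m - 1) :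
    3 * ((m : ℝ) - (t 1 : ℝ)) * ((t 1 : ℝ) - 1) / (((m : ℝ) - 1) * ((m : ℝ) - 2)) ≤
      1 - rIngram m t :=
  one_sub_rIngram_ge_general m hm t hmono hsum
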